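/- Suppose the closed-loop integrator chain ẋᵢ = x_{i+1} (i = 1,…,n-1), ẋₙ = v(t, x + η) + d(t) with n ≥ 2 has an absolute deadline at T. Then the origin is not uniformly Lyapunov stable: there exist ε > 0 such that for every δ > 0 there exist s ∈ [0,T), t ∈ [s,T), and a solution with ‖x(s)‖ ≤ δ but ‖x(t)‖ > ε. -/

import Mathlib

/-!
Start the chain at `δ e₁` at a time `s` with `T - s ≤ δ / 2`. The deadline forces `x₁` to travel
from `δ` to `0` within time `δ / 2`, so by the mean value inequality its derivative `x₂` must
exceed `1` in size somewhere on `[s, T)`, however small `δ` is.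
-/

open Set Filter Topology

/-- A solution, on `[s,T)`, of the closed-loop integrator chain
    ẋᵢ = x_{i+1} (i < n), ẋₙ = v(t, x + η(t)) + d(t). -/
def ChainSol (n : ℕ) (hn : 0 < n) (T : ℝ)
    (v : ℝ → EuclideanSpace ℝ (Fin n) → ℝ) (d : ℝ → ℝ)
    (η : ℝ → EuclideanSpace ℝ (Fin n)) (s : ℝ)
    (x : ℝ → EuclideanSpace ℝ (Fin n)) : Prop :=
  ∀ t ∈ Set.Ico s T,
    (∀ i : Fin n, ∀ h : (i : ℕ) + 1 < n,
      HasDerivAt (fun τ => x τ i) (x t ⟨(i : ℕ) + 1, h⟩) t) ∧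
    HasDerivAt (fun τ => x τ ⟨n - 1, Nat.sub_lt hn one_pos⟩)
      (v t (x t + η t) + d t) t

/-- Absolute deadline at `T` (with η ≡ 0). -/
def ChainAbsDeadline (n : ℕ) (hn : 0 < n) (T : ℝ)
    (v : ℝ → EuclideanSpace ℝ (Fin n) → ℝ) (d : ℝ → ℝ) : Prop :=
  ∀ s ∈ Set.Ico (0:ℝ) T, ∀ x : ℝ → EuclideanSpace ℝ (Fin n),
    ChainSol n hn T v d (fun _ => 0) s x →
    Filter.Tendsto x (nhdsWithin T (Set.Iio T)) (nhds 0)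

theorem norm_le_mul_of_tendsto_nhdsLT_zero {E : Type*} [NormedAddCommGroup E] [NormedSpace ℝ E]
    {f f' : ℝ → E} {s T C : ℝ} (hsT : s < T)
    (hf : ∀ τ ∈ Ico s T, HasDerivAt f (f' τ) τ) (hbound : ∀ τ ∈ Ico s T, ‖f' τ‖ ≤ C)
    (hlim : Tendsto f (𝓝[<] T) (𝓝 0)) :
    ‖f s‖ ≤ C * (T - s) := by
  have hs : s ∈ Ico s T := ⟨le_rfl, hsT⟩
  have hC : 0 ≤ C := (norm_nonneg _).trans (hbound s hs)
  have hdrift : ∀ t ∈ Ico s T, ‖f t - f s‖ ≤ C * (T - s) := fun t ht =>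
    calc ‖f t - f s‖ ≤ C * ‖t - s‖ :=
          (convex_Ico s T).norm_image_sub_le_of_norm_hasDerivWithin_le
            (fun τ hτ => (hf τ hτ).hasDerivWithinAt) hbound hs ht
      _ ≤ C * (T - s) := by
          rw [Real.norm_of_nonneg (sub_nonneg.2 ht.1)]
          gcongr
          exact ht.2.le
  have hlim' : Tendsto (fun t => ‖f t - f s‖) (𝓝[<] T) (𝓝 ‖0 - f s‖) :=
    (hlim.sub_const (f s)).norm
  rw [zero_sub, norm_neg] at hlim'
  exact le_of_tendsto hlim' <| mem_of_superset (Ico_mem_nhdsLT hsT) hdrift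

/-- Theorem 1(iv): under an absolute deadline at `T`, the origin of
    the noise-free closed loop is not uniformly Lyapunov stable: there is ε > 0
    such that for every δ > 0 some solution satisfies ‖x(s)‖ ≤ δ but ‖x(t)‖ > ε
    at some later t ∈ [s,T). -/
theorem stmt7 (n : ℕ) (hn : 2 ≤ n) (T : ℝ) (hT : 0 < T)
    (v : ℝ → EuclideanSpace ℝ (Fin n) → ℝ) (d : ℝ → ℝ)
    (hex : ∀ s ∈ Set.Ico (0:ℝ) T, ∀ ξ : EuclideanSpace ℝ (Fin n),
      ∃ x : ℝ → EuclideanSpace ℝ (Fin n),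
        ChainSol n (by omega) T v d (fun _ => 0) s x ∧ x s = ξ)
    (habs : ChainAbsDeadline n (by omega) T v d) :
    ∃ ε > (0:ℝ), ∀ δ > (0:ℝ), ∃ s ∈ Set.Ico (0:ℝ) T, ∃ t ∈ Set.Ico s T,
      ∃ x : ℝ → EuclideanSpace ℝ (Fin n),
        ChainSol n (by omega) T v d (fun _ => 0) s x ∧
        ‖x s‖ ≤ δ ∧ ε < ‖x t‖ := by
  refine ⟨1, one_pos, fun δ hδ => ?_⟩
  let i₀ : Fin n := ⟨0, by omega⟩
  let i₁ : Fin n := ⟨1, by omega⟩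
  set s := max 0 (T - δ / 2)
  have hs : s ∈ Ico 0 T := ⟨le_max_left _ _, max_lt hT (by linarith)⟩
  have hTs : T - s ≤ δ / 2 := by linarith [le_max_right 0 (T - δ / 2)]
  obtain ⟨x, hsol, hxs⟩ := hex s hs (EuclideanSpace.single i₀ δ)
  suffices ∃ t ∈ Ico s T, 1 < ‖x t‖ by
    obtain ⟨t, ht, hxt⟩ := this
    refine ⟨s, hs, t, ht, x, hsol, ?_, hxt⟩
    simp [hxs, abs_of_pos hδ]
  by_contra! hsmall
  have hlim : Tendsto (fun τ => x τ i₀) (𝓝[<] T) (𝓝 0) := by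
    simpa [Function.comp_def] using
      ((EuclideanSpace.proj i₀).continuous.tendsto 0).comp (habs s hs x hsol)
  have hstart : ‖x s i₀‖ ≤ 1 * (T - s) :=
    norm_le_mul_of_tendsto_nhdsLT_zero hs.2
      (fun τ hτ => (hsol τ hτ).1 i₀ (show 0 + 1 < n by omega))
      (fun τ hτ => (PiLp.norm_apply_le (x τ) i₁).trans (hsmall τ hτ)) hlim
  simp [hxs, abs_of_pos hδ] at hstart
  linarith
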